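/- For all integers d, k ≥ 2: the Natarajan dimension of the One-vs-All class with halfspaces satisfies d_N(W^d_OvA) ≥ d·(k−1); moreover there is a universal constant C > 0 such that for every binary hypothesis class H of VC dimension at most d, the graph dimension of the One-vs-All class H_OvA satisfies d_G(H_OvA) ≤ C·d·k·log(d·k). -/

import Mathlib

open MeasureTheory
open scoped ENNReal

noncomputable def argmaxFin {k : ℕ} [NeZero k] (f : Fin k → ℝ) : Fin k :=
  (Finset.univ.filter fun i => ∀ j, f j ≤ f i).min' (by
    obtain ⟨i, -, hi⟩ := Finset.exists_max_image (Finset.univ : Finset (Fin k)) f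
      ⟨⟨0, Nat.pos_of_ne_zero (NeZero.ne k)⟩, Finset.mem_univ _⟩
    exact ⟨i, Finset.mem_filter.mpr ⟨Finset.mem_univ _, fun j => hi j (Finset.mem_univ _)⟩⟩)

def aug {d : ℕ} (x : Fin d → ℝ) : Fin (d + 1) → ℝ := Fin.snoc x 1

/-- halfspaces over ℝ^d, `true` ↔ +1, sign(0) = 1 -/
def halfspace (d : ℕ) : Set ((Fin d → ℝ) → Bool) :=
  { h | ∃ w : Fin (d + 1) → ℝ, h = fun x => decide (0 ≤ ∑ i, w i * aug x i) }

noncomputable def msvm (d k : ℕ) [NeZero k] : Set ((Fin d → ℝ) → Fin k) :=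
  { h | ∃ W : Fin k → Fin (d + 1) → ℝ,
      h = fun x => argmaxFin (fun i => ∑ j, W i j * aug x j) }

def NShatters {X Y : Type*} (H : Set (X → Y)) (S : Set X) : Prop :=
  ∃ f₁ f₂ : X → Y, (∀ x ∈ S, f₁ x ≠ f₂ x) ∧
    ∀ T ⊆ S, ∃ g ∈ H, (∀ x ∈ T, g x = f₁ x) ∧ ∀ x ∈ S \ T, g x = f₂ x

def GShatters {X Y : Type*} (H : Set (X → Y)) (S : Set X) : Prop :=
  ∃ f : X → Y, ∀ T ⊆ S, ∃ g ∈ H, (∀ x ∈ T, g x = f x) ∧ ∀ x ∈ S \ T, g x ≠ f x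

def VCDimLE {X : Type*} (H : Set (X → Bool)) (d : ℕ) : Prop :=
  ∀ S : Finset X, (∀ b : X → Bool, ∃ h ∈ H, ∀ x ∈ S, h x = b x) → S.card ≤ d

inductive LTree (k : ℕ) : Type where
  | leaf : Fin k → LTree k
  | node : LTree k → LTree k → LTree k

def LTree.labels {k : ℕ} : LTree k → List (Fin k)
  | .leaf i => [i]
  | .node l r => l.labels ++ r.labels

/-- `T` is a tree for `k` classes: its leaf labels form a bijection with `[k]`. -/
def LTree.IsTreeFor {k : ℕ} (T : LTree k) : Prop := T.labels.Perm (List.finRange k)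

def treeClass {X : Type*} {k : ℕ} (H : Set (X → Bool)) : LTree k → Set (X → Fin k)
  | .leaf i => {fun _ => i}
  | .node l r => { f | ∃ c ∈ H, ∃ fl ∈ treeClass H l, ∃ fr ∈ treeClass H r,
      f = fun x => if c x then fr x else fl x }

def treesClass {X : Type*} (H : Set (X → Bool)) (k : ℕ) : Set (X → Fin k) :=
  ⋃ T ∈ { T : LTree k | T.IsTreeFor }, treeClass H T

noncomputable def decode {k : ℕ} [NeZero k] {J : Type*} [Fintype J]
    (M : Fin k → J → ℝ) (u : J → Bool) : Fin k :=
  argmaxFin (fun i => ∑ j, M i j * (if u j then (1 : ℝ) else -1))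

noncomputable def ecocClass {X : Type*} {k : ℕ} [NeZero k] {J : Type*} [Fintype J]
    (H : Set (X → Bool)) (M : Fin k → J → ℝ) : Set (X → Fin k) :=
  { g | ∃ h : J → X → Bool, (∀ j, h j ∈ H) ∧ g = fun x => decode M (fun j => h j x) }

def ovaCode (k : ℕ) : Fin k → Fin k → ℝ := fun i j => if i = j then 1 else -1

def apCode (k : ℕ) : Fin k → { p : Fin k × Fin k // p.1 < p.2 } → ℝ :=
  fun i p => if i = p.1.1 then -1 else if i = p.1.2 then 1 else 0

noncomputable def errStar {X : Type*} [MeasurableSpace X] {k : ℕ}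
    (D : Measure (X × Fin k)) (H : Set (X → Fin k)) : ℝ≥0∞ :=
  ⨅ h ∈ H, D { p | h p.1 ≠ p.2 }

noncomputable def errStarBin {X : Type*} [MeasurableSpace X]
    (Q : Measure (X × Bool)) (H : Set (X → Bool)) : ℝ≥0∞ :=
  ⨅ h ∈ H, Q { p | h p.1 ≠ p.2 }

inductive PTree : Type where
  | leaf : PTree
  | node : PTree → PTree → PTree

def PTree.nLeaves : PTree → ℕ
  | .leaf => 1
  | .node l r => l.nLeaves + r.nLeaves

def PTree.leftLeaves : PTree → ℕ
  | .leaf => 0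
  | .node l _ => l.nLeaves

def PTree.rightLeaves : PTree → ℕ
  | .leaf => 0
  | .node _ r => r.nLeaves

def PTree.labelAux {k : ℕ} (f : ℕ → Fin k) : PTree → ℕ → LTree k
  | .leaf, n => .leaf (f n)
  | .node l r, n => .node (PTree.labelAux f l n) (PTree.labelAux f r (n + l.nLeaves))

/-!
Lower bound: put `k - 1` blocks of `d` points on the lifted parabola `t ↦ (t, -t², eᵢ)`, block `c`
using the parameters `t ∈ {4c, 4c + 1}`. A concave quadratic in `t`, corrected by free coefficients
on the `eᵢ`, gives one halfspace realising any sign pattern on one block and negative on all other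
blocks. Letting classifier `c` fire exactly on the chosen points of block `c`, One-vs-All decodes
to `c` there and to class `0` everywhere else.

Upper bound: if `S` is G-shattered, each `T ⊆ S` is recovered from the traces on `S` of the `k`
binary classifiers realising it, so `2^|S| ≤ (#traces)^k ≤ (|S| + 1)^(dk)` by Sauer–Shelah, and
hence `|S| = O(dk log(dk))`.
-/

open Finset Matrix

lemma argmaxFin_eq_of_isLeast {k : ℕ} [NeZero k] {f : Fin k → ℝ} {i : Fin k}
    (hi : IsLeast {j | ∀ l, f l ≤ f j} i) : argmaxFin f = i :=
  le_antisymm (min'_le _ _ (by simpa using hi.1))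
    (le_min' _ _ _ fun _ hj => hi.2 (by simpa using hj))

lemma sum_ovaCode_mul {k : ℕ} (u : Fin k → Bool) (i : Fin k) :
    ∑ j, ovaCode k i j * (if u j then (1 : ℝ) else -1)
      = 2 * (if u i then (1 : ℝ) else -1) - ∑ j, (if u j then (1 : ℝ) else -1) := by
  have h (j : Fin k) : ovaCode k i j * (if u j then (1 : ℝ) else -1)
      = (if i = j then 2 * (if u j then (1 : ℝ) else -1) else 0)
        - (if u j then (1 : ℝ) else -1) := by
    by_cases hj : i = j <;> cases u j <;> simp [ovaCode, hj] <;> norm_num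
  simp only [h, sum_sub_distrib, sum_ite_eq, mem_univ, if_true]

lemma decode_ovaCode_eq {k : ℕ} [NeZero k] {u : Fin k → Bool} {i : Fin k}
    (hi : u i = true) (hlt : ∀ j < i, u j = false) : decode (ovaCode k) u = i := by
  refine argmaxFin_eq_of_isLeast ⟨fun j => ?_, fun j hj => ?_⟩
  · simp only [sum_ovaCode_mul, hi]
    split_ifs <;> norm_num
  · have hj := hj i
    simp only [sum_ovaCode_mul, hi] at hj
    by_contra! hji
    norm_num [hlt j hji] at hj

lemma decode_ovaCode_of_forall_false {k : ℕ} [NeZero k] {u : Fin k → Bool}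
    (hu : ∀ j, u j = false) : decode (ovaCode k) u = 0 :=
  argmaxFin_eq_of_isLeast
    ⟨fun j => by rw [sum_ovaCode_mul, sum_ovaCode_mul, hu, hu], fun j _ => Fin.zero_le j⟩

lemma mem_halfspace_of_dotProduct {d : ℕ} (v : Fin d → ℝ) (b : ℝ) :
    (fun x => decide (0 ≤ v ⬝ᵥ x + b)) ∈ halfspace d :=
  ⟨Fin.snoc v b, by
    ext x
    simp only [aug, Fin.sum_univ_castSucc, dotProduct, Fin.snoc_castSucc, Fin.snoc_last, mul_one]
    congr⟩

def blockOffset {m : ℕ} : Fin 2 ⊕ Fin m → ℕ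
  | .inl i => i
  | .inr _ => 0

def blockDir {m : ℕ} : Fin 2 ⊕ Fin m → Fin m → ℝ
  | .inl _ => 0
  | .inr i => Pi.single i 1

noncomputable def curvePoint (m c : ℕ) (b : Fin 2 ⊕ Fin m) : Fin (m + 2) → ℝ :=
  vecCons (4 * c + blockOffset b : ℝ) (vecCons (-(4 * c + blockOffset b : ℝ) ^ 2) (blockDir b))

def bumpWeights {m : ℕ} (c : ℕ) (s : Fin 2 ⊕ Fin m → ℝ) : Fin (m + 2) → ℝ :=
  vecCons (72 * c + 9 + s (.inl 1) - s (.inl 0)) (vecCons 9 fun i => s (.inr i) - s (.inl 0))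

def bumpBias {m : ℕ} (c : ℕ) (s : Fin 2 ⊕ Fin m → ℝ) : ℝ :=
  -4 * c * (36 * c + 9 + s (.inl 1) - s (.inl 0)) + s (.inl 0)

lemma bump_curvePoint {m : ℕ} (c c' : ℕ) (s : Fin 2 ⊕ Fin m → ℝ) (b : Fin 2 ⊕ Fin m) :
    bumpWeights c s ⬝ᵥ curvePoint m c' b + bumpBias c s
      = -9 * (4 * c' + blockOffset b - 4 * c) ^ 2
        + (9 + s (.inl 1) - s (.inl 0)) * (4 * c' + blockOffset b - 4 * c) + s (.inl 0)
        + (fun i => s (.inr i) - s (.inl 0)) ⬝ᵥ blockDir b := by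
  simp only [bumpWeights, curvePoint, bumpBias, cons_dotProduct_cons]
  ring

lemma bump_curvePoint_self {m : ℕ} (c : ℕ) (s : Fin 2 ⊕ Fin m → ℝ) (b : Fin 2 ⊕ Fin m) :
    bumpWeights c s ⬝ᵥ curvePoint m c b + bumpBias c s = s b := by
  rw [bump_curvePoint]
  rcases b with b | i
  · fin_cases b <;> simp [blockOffset, blockDir]; ring
  · simp [blockOffset, blockDir]

lemma bump_curvePoint_neg {m : ℕ} {c c' : ℕ} (hc : c' ≠ c) {s : Fin 2 ⊕ Fin m → ℝ}
    (hs : ∀ b, |s b| ≤ 1) (b : Fin 2 ⊕ Fin m) :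
    bumpWeights c s ⬝ᵥ curvePoint m c' b + bumpBias c s < 0 := by
  rw [bump_curvePoint]
  have h0 := abs_le.mp (hs (.inl 0))
  have h1 := abs_le.mp (hs (.inl 1))
  have hdir : |(fun i => s (.inr i) - s (.inl 0)) ⬝ᵥ blockDir b| ≤ 2 := by
    rcases b with b | i
    · simp [blockDir]
    · simpa [blockDir, one_add_one_eq_two] using
        (abs_sub _ _).trans (add_le_add (hs (.inr i)) (hs (.inl 0)))
  have hdir := abs_le.mp hdir
  have hoff : (blockOffset b : ℝ) ≤ 1 := by
    rcases b with b | i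
    · exact_mod_cast Nat.le_of_lt_succ b.isLt
    · simp [blockOffset]
  have hoff0 : (0 : ℝ) ≤ blockOffset b := Nat.cast_nonneg _
  set u : ℝ := 4 * c' + blockOffset b - 4 * c
  rcases hc.lt_or_gt with h | h
  · have hu : u ≤ -3 := by
      have : (c' : ℝ) + 1 ≤ c := by exact_mod_cast h
      linarith
    nlinarith
  · have hu : 4 ≤ u := by
      have : (c : ℝ) + 1 ≤ c' := by exact_mod_cast h
      linarith
    nlinarith

lemma exists_mem_halfspace_curvePoint_iff (m c : ℕ) (P : Fin 2 ⊕ Fin m → Prop) :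
    ∃ h ∈ halfspace (m + 2), ∀ c' b, h (curvePoint m c' b) = true ↔ c' = c ∧ P b := by
  classical
  let s : Fin 2 ⊕ Fin m → ℝ := fun b => if P b then 1 else -1
  have hs (b) : |s b| ≤ 1 := by by_cases hb : P b <;> simp [s, hb]
  refine ⟨_, mem_halfspace_of_dotProduct (bumpWeights c s) (bumpBias c s), fun c' b => ?_⟩
  rcases eq_or_ne c' c with rfl | hc
  · by_cases hb : P b <;> simp [bump_curvePoint_self, s, hb]
  · simp [(bump_curvePoint_neg hc hs b).not_ge, hc]

def SeparatesBlocks {X ι κ : Type*} (H : Set (X → Bool)) (p : ι → X) (β : ι → κ) : Prop :=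
  ∀ (j : κ) (T : Set ι), ∃ h ∈ H, ∀ a, h (p a) = true ↔ a ∈ T ∧ β a = j

namespace SeparatesBlocks

variable {X ι κ : Type*} {H : Set (X → Bool)} {p : ι → X} {β : ι → κ}

lemma injective (hH : SeparatesBlocks H p β) : Function.Injective p := by
  intro a a' h
  obtain ⟨g, -, hg⟩ := hH (β a) {a}
  exact ((hg a').mp (h ▸ (hg a).mpr ⟨rfl, rfl⟩)).1.symm

lemma nShatters_ecocClass_ovaCode {k : ℕ} [NeZero k] {β : ι → Fin k}
    (hH : SeparatesBlocks H p β) (hβ : ∀ a, β a ≠ 0) :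
    NShatters (ecocClass H (ovaCode k)) (Set.range p) := by
  classical
  refine ⟨Function.extend p β 0, 0, ?_, fun T hT => ?_⟩
  · rintro _ ⟨a, rfl⟩
    simpa [hH.injective.extend_apply] using hβ a
  choose h hmem hh using fun j => hH j (p ⁻¹' T)
  refine ⟨_, ⟨h, hmem, rfl⟩, ?_, ?_⟩
  · intro x hx
    obtain ⟨a, rfl⟩ := hT hx
    rw [hH.injective.extend_apply]
    exact decode_ovaCode_eq ((hh _ a).mpr ⟨hx, rfl⟩)
      fun j hj => Bool.eq_false_iff.mpr fun hj' => hj.ne ((hh j a).mp hj').2.symm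
  · rintro _ ⟨⟨a, rfl⟩, ha⟩
    exact decode_ovaCode_of_forall_false fun j =>
      Bool.eq_false_iff.mpr fun hj => ha ((hh j a).mp hj).1

end SeparatesBlocks

lemma separatesBlocks_halfspace_curvePoint (m k : ℕ) [NeZero k] :
    SeparatesBlocks (halfspace (m + 2))
      (fun a : {c : Fin k // c ≠ 0} × (Fin 2 ⊕ Fin m) => curvePoint m a.1.1 a.2) (·.1.1) := by
  intro j T
  obtain ⟨h, hH, hh⟩ :=
    exists_mem_halfspace_curvePoint_iff m j (fun b => ∃ a ∈ T, a.1.1 = j ∧ a.2 = b)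
  refine ⟨h, hH, fun a => ?_⟩
  rw [hh, Fin.val_inj]
  constructor
  · rintro ⟨rfl, a', ha', h1, h2⟩
    exact ⟨by rwa [show a = a' from Prod.ext (Subtype.ext h1.symm) h2.symm], rfl⟩
  · rintro ⟨ha, rfl⟩
    exact ⟨rfl, a, ha, rfl, rfl⟩

theorem exists_nShatters_ecocClass_halfspace_ovaCode (d k : ℕ) [NeZero k] (hd : 2 ≤ d) :
    ∃ S : Finset (Fin d → ℝ), NShatters (ecocClass (halfspace d) (ovaCode k)) ↑S ∧
      d * (k - 1) ≤ S.card := by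
  obtain ⟨m, rfl⟩ : ∃ m, d = m + 2 := ⟨d - 2, by omega⟩
  have hsep := separatesBlocks_halfspace_curvePoint m k
  refine ⟨univ.image
    fun a : {c : Fin k // c ≠ 0} × (Fin 2 ⊕ Fin m) => curvePoint m a.1.1 a.2, ?_, ?_⟩
  · simpa using hsep.nShatters_ecocClass_ovaCode fun a => a.1.2
  · rw [card_image_of_injective _ hsep.injective]
    simp [Nat.mul_comm, Nat.add_comm]

section Traces

variable {X : Type*}

open Classical in
noncomputable def traces (H : Set (X → Bool)) (S : Finset X) : Finset (Finset X) :=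
  S.powerset.filter fun u => ∃ h ∈ H, S.filter (h · = true) = u

lemma mem_traces {H : Set (X → Bool)} {S u : Finset X} :
    u ∈ traces H S ↔ ∃ h ∈ H, S.filter (h · = true) = u := by
  classical
  simp only [traces, mem_filter, mem_powerset, and_iff_right_iff_imp]
  rintro ⟨h, -, rfl⟩
  convert filter_subset _ S

lemma card_le_of_shatters_traces {H : Set (X → Bool)} {d : ℕ} (hvc : VCDimLE H d)
    {S t : Finset X} [DecidableEq X] (ht : (traces H S).Shatters t) : t.card ≤ d := by
  obtain ⟨u, hu, htu⟩ := ht.exists_superset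
  obtain ⟨g, -, rfl⟩ := mem_traces.mp hu
  have htS : t ⊆ S := htu.trans (filter_subset _ S)
  refine hvc t fun b => ?_
  obtain ⟨u, hu, hcap⟩ := ht (filter_subset (b · = true) t)
  obtain ⟨h, hh, rfl⟩ := mem_traces.mp hu
  refine ⟨h, hh, fun x hx => Bool.eq_iff_iff.mpr ?_⟩
  simpa [hx, htS hx] using congrArg (x ∈ ·) hcap

lemma sum_choose_le_succ_pow (m d : ℕ) : ∑ i ∈ range (d + 1), m.choose i ≤ (m + 1) ^ d := by
  induction d with
  | zero => simp
  | succ n ih =>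
    rw [sum_range_succ, pow_succ]
    calc (∑ i ∈ range (n + 1), m.choose i) + m.choose (n + 1)
        ≤ (m + 1) ^ n + m * (m + 1) ^ n := by
          gcongr
          calc m.choose (n + 1) ≤ m ^ (n + 1) := Nat.choose_le_pow _ _
            _ = m * m ^ n := by ring
            _ ≤ m * (m + 1) ^ n := by gcongr; omega
      _ = (m + 1) ^ n * (m + 1) := by ring

lemma card_traces_le {H : Set (X → Bool)} {d : ℕ} (hvc : VCDimLE H d) (S : Finset X) :
    (traces H S).card ≤ (S.card + 1) ^ d := by
  classical
  have hsub : (traces H S).shatterer ⊆ (range (d + 1)).biUnion S.powersetCard := by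
    intro t ht
    obtain ⟨u, hu, htu⟩ := (mem_shatterer.mp ht).exists_superset
    obtain ⟨g, -, rfl⟩ := mem_traces.mp hu
    have htS : t ⊆ S := htu.trans (filter_subset _ S)
    have htd := card_le_of_shatters_traces hvc (mem_shatterer.mp ht)
    exact mem_biUnion.mpr ⟨t.card, mem_range.mpr (by omega), mem_powersetCard.mpr ⟨htS, rfl⟩⟩
  calc (traces H S).card ≤ (traces H S).shatterer.card := card_le_card_shatterer _
    _ ≤ ∑ i ∈ range (d + 1), (S.powersetCard i).card := (card_le_card hsub).trans card_biUnion_le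
    _ = ∑ i ∈ range (d + 1), S.card.choose i := by simp only [card_powersetCard]
    _ ≤ (S.card + 1) ^ d := sum_choose_le_succ_pow _ _

end Traces

lemma two_pow_card_le_card_traces_pow {X J : Type*} [Fintype J] {k : ℕ} [NeZero k]
    {H : Set (X → Bool)} {M : Fin k → J → ℝ} {S : Finset X}
    (hG : GShatters (ecocClass H M) ↑S) :
    2 ^ S.card ≤ (traces H S).card ^ Fintype.card J := by
  classical
  obtain ⟨f, hf⟩ := hG
  have hcode (T : Finset X) (hT : T ⊆ S) : ∃ h : J → X → Bool, (∀ j, h j ∈ H) ∧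
      ∀ x ∈ S, (decode M (h · x) = f x ↔ x ∈ T) := by
    obtain ⟨_, ⟨h, hH, rfl⟩, hon, hoff⟩ := hf T (mod_cast hT)
    refine ⟨h, hH, fun x hx => ⟨fun hfx => ?_, hon x⟩⟩
    by_contra hxT
    exact hoff x ⟨hx, hxT⟩ hfx
  choose! h hH hmem using hcode
  let φ (T : Finset X) (j : J) : Finset X := S.filter (h T j · = true)
  have hφ : Set.InjOn φ S.powerset := by
    intro T₁ hT₁ T₂ hT₂ heq
    have hpt (x) (hx : x ∈ S) : (h T₁ · x) = (h T₂ · x) := funext fun j => by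
      have := congrArg (x ∈ ·) (congrFun heq j)
      simp only [φ, mem_filter, hx, true_and, eq_iff_iff] at this
      exact Bool.eq_iff_iff.mpr this
    ext x
    by_cases hx : x ∈ S
    · rw [← hmem T₁ (mem_powerset.mp hT₁) x hx, ← hmem T₂ (mem_powerset.mp hT₂) x hx, hpt x hx]
    · exact iff_of_false (fun h => hx (mem_powerset.mp hT₁ h)) fun h => hx (mem_powerset.mp hT₂ h)
  calc 2 ^ S.card = S.powerset.card := (card_powerset S).symm
    _ ≤ (Fintype.piFinset fun _ : J => traces H S).card :=
        card_le_card_of_injOn φ (fun T hT => Fintype.mem_piFinset.mpr fun j =>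
          mem_traces.mpr ⟨h T j, hH T (mem_powerset.mp hT) j, rfl⟩) hφ
    _ = (traces H S).card ^ Fintype.card J := by simp

lemma le_mul_log_of_two_pow_le {m a : ℕ} (h : 2 ^ m ≤ (m + 1) ^ a) (ha : 4 ≤ a) :
    (m : ℝ) ≤ 10 * a * Real.log a := by
  have ha4 : (4 : ℝ) ≤ a := by exact_mod_cast ha
  have hm0 : (0 : ℝ) ≤ m := m.cast_nonneg
  have hlog2 : (1 / 2 : ℝ) ≤ Real.log 2 := by linarith [Real.log_two_gt_d9]
  have hlogm : (0 : ℝ) ≤ Real.log (m + 1) := Real.log_nonneg (by linarith)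
  have hmlog : (m : ℝ) ≤ 2 * a * Real.log (m + 1) := by
    have := Real.log_le_log (by positivity) (show ((2 ^ m : ℕ) : ℝ) ≤ ((m + 1) ^ a : ℕ) from
      mod_cast h)
    push_cast at this
    rw [Real.log_pow, Real.log_pow] at this
    nlinarith
  -- `log y ≤ 2 √y` gives the crude bound `m ≤ 32 a²`, which fed back into `hmlog` gives the claim
  have hsqrt : Real.log (m + 1) ≤ 2 * √(m + 1) := by
    have := Real.log_le_sub_one_of_pos (Real.sqrt_pos.mpr (by linarith : (0 : ℝ) < m + 1))
    rw [Real.log_sqrt (by linarith)] at this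
    linarith
  have hsq : (m : ℝ) ≤ 32 * a ^ 2 := by
    have h4 : (m : ℝ) ≤ 4 * a * √(m + 1) := by nlinarith
    have := Real.sq_sqrt (by linarith : (0 : ℝ) ≤ m + 1)
    nlinarith [Real.sqrt_nonneg ((m : ℝ) + 1), sq_nonneg ((m : ℝ) - 4 * a * √(m + 1))]
  have hloga : 0 < Real.log a := Real.log_pos (by linarith)
  have hlog33 : Real.log 33 ≤ 3 * Real.log a :=
    calc Real.log 33 ≤ Real.log ((a : ℝ) ^ 3) := Real.log_le_log (by norm_num) (by nlinarith)
      _ = 3 * Real.log a := by rw [Real.log_pow]; norm_num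
  have hlogm' : Real.log (m + 1) ≤ Real.log 33 + 2 * Real.log a :=
    calc Real.log (m + 1) ≤ Real.log (33 * (a : ℝ) ^ 2) :=
          Real.log_le_log (by linarith) (by nlinarith)
      _ = Real.log 33 + 2 * Real.log a := by
        rw [Real.log_mul (by norm_num) (by positivity), Real.log_pow]; norm_num
  calc (m : ℝ) ≤ 2 * a * Real.log (m + 1) := hmlog
    _ ≤ 2 * a * (5 * Real.log a) := by gcongr; linarith
    _ = 10 * a * Real.log a := by ring

/-- For all integers d, k ≥ 2: d_N(W^d_OvA) ≥ d·(k−1); moreover there is a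
universal constant C > 0 such that for every binary class H of VC dimension at most d,
d_G(H_OvA) ≤ C·d·k·log(d·k). -/
theorem stmt6 : ∃ C : ℝ, 0 < C ∧ ∀ (d k : ℕ) [NeZero k], 2 ≤ d → 2 ≤ k →
    (∃ S : Finset (Fin d → ℝ), NShatters (ecocClass (halfspace d) (ovaCode k)) ↑S ∧
      d * (k - 1) ≤ S.card) ∧
    (∀ (X : Type*) (H : Set (X → Bool)), VCDimLE H d →
      ∀ S : Finset X, GShatters (ecocClass H (ovaCode k)) ↑S →
        (S.card : ℝ) ≤ C * d * k * Real.log (d * k)) := by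
  refine ⟨10, by norm_num, fun d k _ hd hk => ⟨exists_nShatters_ecocClass_halfspace_ovaCode d k hd,
    fun X H hvc S hG => ?_⟩⟩
  have hcount : 2 ^ S.card ≤ (S.card + 1) ^ (d * k) :=
    calc 2 ^ S.card ≤ (traces H S).card ^ k := by
          simpa using two_pow_card_le_card_traces_pow hG
      _ ≤ ((S.card + 1) ^ d) ^ k := by gcongr; exact card_traces_le hvc S
      _ = (S.card + 1) ^ (d * k) := (pow_mul _ _ _).symm
  have := le_mul_log_of_two_pow_le hcount (by nlinarith)
  push_cast at this
  linarith
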